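/- arXiv:2209.13249 — 4 statements merged into one kernel-verified Lean document; each statement's English description precedes it below -/
import Mathlib

section
/- Let X be a compact metric space, O ⊆ X a compact subset, and f, g homeomorphisms of X whose support supp(g,f) (the closure of {x : f(x) ≠ g(x)}) is contained in O. Then O is an attracting set for f if and only if O is an attracting set for g. -/
open Set

theorem Set.image_subset_image_of_setOf_ne_subset {α β : Type*} {f g : α → β}
    (hf : Function.Surjective f) (hg : Function.Injective g) {s : Set α}
    (h : {x | f x ≠ g x} ⊆ s) : g '' s ⊆ f '' s := by
  rintro _ ⟨x, hx, rfl⟩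
  obtain ⟨z, hz⟩ := hf (g x)
  refine ⟨z, ?_, hz⟩
  by_contra hzs
  have hfz : f z = g z := not_not.mp fun hne => hzs (h hne)
  have hzx : z = x := hg (hfz ▸ hz)
  exact hzs (hzx ▸ hx)

theorem Equiv.image_eq_image_of_setOf_ne_subset {α β : Type*} (f g : α ≃ β) {s : Set α}
    (h : {x | f x ≠ g x} ⊆ s) : f '' s = g '' s := by
  refine (image_subset_image_of_setOf_ne_subset g.surjective f.injective ?_).antisymm
    (image_subset_image_of_setOf_ne_subset f.surjective g.injective h)
  simpa only [ne_comm] using h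

theorem attracting_iff_of_supp_subset_general
    {X : Type*} [MetricSpace X] (f g : X ≃ₜ X) (O : Set X)
    (hsupp : closure {x | f x ≠ g x} ⊆ O) :
    (⇑f '' O ⊆ interior O ↔ ⇑g '' O ⊆ interior O) := by
  have himage : ⇑f '' O = ⇑g '' O :=
    Equiv.image_eq_image_of_setOf_ne_subset f.toEquiv g.toEquiv (subset_closure.trans hsupp)
  rw [himage]

/-- Let `O` be a compact subset and `f, g` homeomorphisms whose support
`supp(g,f) = closure {x | f x ≠ g x}` is contained in `O`.  Then `O` is an attracting set
for `f` if and only if it is an attracting set for `g`. -/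
theorem attracting_iff_of_supp_subset
    {X : Type*} [MetricSpace X] [CompactSpace X] (f g : X ≃ₜ X) (O : Set X)
    (hO : IsCompact O) (hsupp : closure {x | f x ≠ g x} ⊆ O) :
    (⇑f '' O ⊆ interior O ↔ ⇑g '' O ⊆ interior O) :=
  attracting_iff_of_supp_subset_general f g O hsupp
end

section
/- Let X be a compact metric space, O a compact subset, and f, g homeomorphisms with supp(g,f) ⊆ O. Then supp(g⁻¹, f⁻¹) ⊆ f(O), and consequently if O is a repelling set for f (i.e., f⁻¹(O) ⊆ interior(O)), then O is a repelling set for g. -/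
open Set Topology

theorem Equiv.image_setOf_ne {α β : Type*} (f g : α ≃ β) :
    f '' {x | f x ≠ g x} = {y | f.symm y ≠ g.symm y} := by
  ext y
  rw [f.image_eq_preimage_symm, mem_preimage, mem_ofPred_eq, mem_ofPred_eq, f.apply_symm_apply,
    ne_comm]
  exact g.eq_symm_apply.not.symm

theorem Homeomorph.closure_setOf_symm_ne {X Y : Type*} [TopologicalSpace X] [TopologicalSpace Y]
    (f g : X ≃ₜ Y) :
    closure {y | f.symm y ≠ g.symm y} = f '' closure {x | f x ≠ g x} := by
  rw [f.image_closure]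
  exact congrArg closure (f.toEquiv.image_setOf_ne g.toEquiv).symm

theorem Homeomorph.symm_apply_eq_or_mem_interior {X Y : Type*} [TopologicalSpace X]
    [TopologicalSpace Y] [T2Space Y] (f g : X ≃ₜ Y) {O : Set X} (hO : {x | f x ≠ g x} ⊆ O)
    (y : Y) : g.symm y = f.symm y ∨ g.symm y ∈ interior O := by
  by_cases hfg : f (g.symm y) = g (g.symm y)
  · left
    rw [f.eq_symm_apply, hfg, g.apply_symm_apply]
  · exact Or.inr (interior_maximal hO (isOpen_ne_fun f.continuous g.continuous) hfg)

theorem supp_inv_subset_image_and_repelling_general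
    {X : Type*} [MetricSpace X] (f g : X ≃ₜ X) (O : Set X)
    (hsupp : closure {x | f x ≠ g x} ⊆ O) :
    closure {x | f.symm x ≠ g.symm x} ⊆ ⇑f '' O ∧
      (⇑f.symm '' O ⊆ interior O → ⇑g.symm '' O ⊆ interior O) := by
  refine ⟨(f.closure_setOf_symm_ne g).symm ▸ image_mono hsupp, fun hrep => ?_⟩
  rintro _ ⟨y, hy, rfl⟩
  rcases f.symm_apply_eq_or_mem_interior g (subset_closure.trans hsupp) y with heq | hint
  · exact heq ▸ hrep (mem_image_of_mem _ hy)
  · exact hint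

/-- If `supp(g,f) ⊆ O` for a compact set `O`, then `supp(g⁻¹,f⁻¹) ⊆ f(O)`, and
consequently if `O` is a repelling set for `f` (attracting for `f⁻¹`) then `O` is a
repelling set for `g`. -/
theorem supp_inv_subset_image_and_repelling
    {X : Type*} [MetricSpace X] [CompactSpace X] (f g : X ≃ₜ X) (O : Set X)
    (hO : IsCompact O) (hsupp : closure {x | f x ≠ g x} ⊆ O) :
    closure {x | f.symm x ≠ g.symm x} ⊆ ⇑f '' O ∧
      (⇑f.symm '' O ⊆ interior O → ⇑g.symm '' O ⊆ interior O) :=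
  supp_inv_subset_image_and_repelling_general f g O hsupp
end

section
/- Let X be a compact metric space with homeomorphism f, and U = A ∩ R a filtrating set (intersection of a compact attracting set A and a compact repelling set R). If x ∈ U and f(x) ∉ U, then for every n > 0 one has fⁿ(x) ∉ U. -/
open Set

theorem Equiv.mem_of_iterate_mem_of_mapsTo_symm {α : Type*} (e : α ≃ α) {s : Set α}
    (hs : MapsTo e.symm s s) (n : ℕ) {y : α} (h : e^[n] y ∈ s) : y ∈ s :=
  e.left_inv.iterate n y ▸ hs.iterate n h

theorem filtrating_no_return_general
    {X : Type*} [MetricSpace X] (f : X ≃ₜ X) (A R : Set X)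
    (hAattr : ⇑f '' A ⊆ interior A)
    (hRrep : ⇑f.symm '' R ⊆ interior R)
    (x : X) (hx : x ∈ A ∩ R) (hfx : f x ∉ A ∩ R) :
    ∀ n > 0, (⇑f)^[n] x ∉ A ∩ R := by
  have hA : MapsTo f A A := mapsTo_iff_image_subset.2 (hAattr.trans interior_subset)
  have hR : MapsTo f.symm R R := mapsTo_iff_image_subset.2 (hRrep.trans interior_subset)
  rintro n hn ⟨-, hnR⟩
  obtain ⟨m, rfl⟩ := Nat.exists_eq_succ_of_ne_zero hn.ne'
  rw [Function.iterate_succ_apply] at hnR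
  exact hfx ⟨hA hx.1, f.toEquiv.mem_of_iterate_mem_of_mapsTo_symm hR m hnR⟩

/-- Let `U = A ∩ R` be a filtrating set (intersection of a compact attracting set `A` and
a compact repelling set `R`).  If `x ∈ U` and `f x ∉ U`, then `fⁿ(x) ∉ U` for all `n > 0`. -/
theorem filtrating_no_return
    {X : Type*} [MetricSpace X] [CompactSpace X] (f : X ≃ₜ X) (A R : Set X)
    (hA : IsCompact A) (hAattr : ⇑f '' A ⊆ interior A)
    (hR : IsCompact R) (hRrep : ⇑f.symm '' R ⊆ interior R)
    (x : X) (hx : x ∈ A ∩ R) (hfx : f x ∉ A ∩ R) :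
    ∀ n > 0, (⇑f)^[n] x ∉ A ∩ R :=
  filtrating_no_return_general f A R hAattr hRrep x hx hfx
end

section
/- Let X be a compact metric space, K ⊆ X compact, and f, g homeomorphisms of X such that the support supp(g,f) is contained in K and meets the complement of no connected component of K entirely (i.e., every connected component of K contains a point where f = g). Then for every connected component L of K one has f(L) = g(L). -/
/-!
Put `h = g⁻¹ ∘ f`. The points moved by `h` are exactly those where `f ≠ g`, so `h` and `h⁻¹`
move only points of `K` and hence map `K` into itself. A connected component `L` of `K` is then
carried by `h` onto a connected subset of `K` that meets `L` in a point fixed by `h`, which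
forces `h(L) ⊆ L`; the same holds for `h⁻¹`, so `h(L) = L`, that is, `f(L) = g(L)`.
-/

open Set Topology Function

theorem Equiv.fixedPoints_trans_symm {α β : Type*} (e₁ e₂ : α ≃ β) :
    fixedPoints (e₁.trans e₂.symm) = {x | e₁ x = e₂ x} := by
  ext x
  simp only [mem_fixedPoints, IsFixedPt, Equiv.trans_apply, Equiv.symm_apply_eq, mem_ofPred_eq]

theorem Function.Injective.mapsTo_of_compl_fixedPoints_subset {α : Type*} {f : α → α}
    (hf : Injective f) {K : Set α} (hK : (fixedPoints f)ᶜ ⊆ K) : MapsTo f K K := by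
  intro x hx
  by_cases hfx : IsFixedPt f x
  · rwa [hfx.eq]
  · exact hK fun hfx' => hfx (hf.isFixedPt_apply_iff.mp hfx')

theorem mapsTo_connectedComponentIn_of_isFixedPt {X : Type*} [TopologicalSpace X] {f : X → X}
    (hf : Continuous f) {K : Set X} (hK : MapsTo f K K) {x y : X}
    (hy : y ∈ connectedComponentIn K x) (hfy : IsFixedPt f y) :
    MapsTo f (connectedComponentIn K x) (connectedComponentIn K x) := by
  rw [mapsTo_iff_image_subset, connectedComponentIn_eq hy]
  exact (isPreconnected_connectedComponentIn.image f hf.continuousOn).subset_connectedComponentIn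
    ⟨y, mem_connectedComponentIn (connectedComponentIn_subset K x hy), hfy⟩
    ((hK.mono_left (connectedComponentIn_subset K y)).image_subset)

theorem Homeomorph.image_connectedComponentIn_eq_of_isFixedPt {X : Type*} [TopologicalSpace X]
    (h : X ≃ₜ X) {K : Set X} (hK : (fixedPoints h)ᶜ ⊆ K) {x y : X}
    (hy : y ∈ connectedComponentIn K x) (hhy : IsFixedPt h y) :
    h '' connectedComponentIn K x = connectedComponentIn K x := by
  have hK' : (fixedPoints h.symm)ᶜ ⊆ K := by
    rwa [← h.coe_symm_toEquiv, fixedPoints_symm, h.coe_toEquiv]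
  have hmaps := mapsTo_connectedComponentIn_of_isFixedPt h.continuous
    (h.injective.mapsTo_of_compl_fixedPoints_subset hK) hy hhy
  have hmaps_symm := mapsTo_connectedComponentIn_of_isFixedPt h.symm.continuous
    (h.symm.injective.mapsTo_of_compl_fixedPoints_subset hK') hy hhy.equiv_symm
  exact hmaps.image_subset.antisymm fun z hz => ⟨h.symm z, hmaps_symm hz, h.apply_symm_apply z⟩

theorem image_of_component_eq_of_strict_support_general
    {X : Type*} [MetricSpace X] (f g : X ≃ₜ X) (K : Set X)
    (hsupp : closure {x | f x ≠ g x} ⊆ K)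
    (hstrict : ∀ x ∈ K, ∃ y ∈ connectedComponentIn K x, y ∉ closure {x | f x ≠ g x}) :
    ∀ x ∈ K, ⇑f '' connectedComponentIn K x = ⇑g '' connectedComponentIn K x := by
  intro x hx
  obtain ⟨y, hyL, hyS⟩ := hstrict x hx
  have hfix : fixedPoints (f.trans g.symm) = {z | f z = g z} :=
    f.toEquiv.fixedPoints_trans_symm g.toEquiv
  have hmoved : (fixedPoints (f.trans g.symm))ᶜ ⊆ K := by
    rw [hfix]
    exact subset_closure.trans hsupp
  have hy : IsFixedPt (f.trans g.symm) y := by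
    rw [← mem_fixedPoints, hfix]
    by_contra hne
    exact hyS (subset_closure hne)
  calc ⇑f '' connectedComponentIn K x
      = g '' (f.trans g.symm '' connectedComponentIn K x) := by
        simp [image_image]
    _ = g '' connectedComponentIn K x := by
        rw [(f.trans g.symm).image_connectedComponentIn_eq_of_isFixedPt hmoved hyL hy]

/-- If the support of `g` with respect to `f` is strictly contained in the compact set
`K` (it is contained in `K` and every connected component of `K` contains a point where
`f = g`), then `f(L) = g(L)` for every connected component `L` of `K`. -/
theorem image_of_component_eq_of_strict_support
    {X : Type*} [MetricSpace X] [CompactSpace X] (f g : X ≃ₜ X) (K : Set X)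
    (hK : IsCompact K) (hsupp : closure {x | f x ≠ g x} ⊆ K)
    (hstrict : ∀ x ∈ K, ∃ y ∈ connectedComponentIn K x, y ∉ closure {x | f x ≠ g x}) :
    ∀ x ∈ K, ⇑f '' connectedComponentIn K x = ⇑g '' connectedComponentIn K x :=
  image_of_component_eq_of_strict_support_general f g K hsupp hstrict
end
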